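/- Define F₂(z) = √π · Σ_{n=2}^∞ zⁿ/(n(n-1)·Γ(n + 1/2)) for z > 0. Then F₂(z)/(z^{-3/2}·e^{z}) → √π as z → ∞. -/

import Mathlib

/-!
The Beta integral `∫₀¹ uⁿ √(1-u) du = n! Γ(3/2) / Γ(n + 5/2)` turns the series into an integral:
summing under the integral sign gives `F₂(z) = 2 ∫₀¹ √(1-u) (e^{zu} - 1 - zu) / u² du`.
On `[0, 1/2]` the integrand is `O(z² e^{z/2})` and on `[1/2, 1]` its polynomial part is `O(z)`,
both negligible against `z^{-3/2} e^z`. On the remaining piece `∫_{1/2}^1 √(1-u) e^{zu} / u² du`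
the substitution `u = 1 - s/z` gives `z^{-3/2} e^z ∫₀^{z/2} √s e^{-s} (1 - s/z)^{-2} ds`, and by
dominated convergence the last integral tends to `∫₀^∞ √s e^{-s} ds = Γ(3/2) = √π / 2`.
-/

open Real Filter

noncomputable def F2fun (z : ℝ) : ℝ :=
  Real.sqrt π *
    ∑' n : ℕ, z ^ (n + 2) /
      (((n : ℝ) + 2) * ((n : ℝ) + 1) * Real.Gamma (1 / 2 + ((n : ℝ) + 2)))

open MeasureTheory Set intervalIntegral
open scoped Nat Topology

namespace Real

lemma hasSum_pow_div_factorial_add_two (x : ℝ) :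
    HasSum (fun n : ℕ => x ^ (n + 2) / (n + 2)!) (exp x - 1 - x) := by
  have h := (hasSum_nat_add_iff' 2).mpr (exp_eq_exp_ℝ ▸ NormedSpace.expSeries_div_hasSum_exp x)
  simpa [Finset.sum_range_succ, sub_sub] using h

lemma exp_sub_one_sub_le {x : ℝ} (hx : 0 ≤ x) : exp x - 1 - x ≤ x ^ 2 / 2 * exp x := by
  refine hasSum_le (fun n => ?_) (hasSum_pow_div_factorial_add_two x)
    ((exp_eq_exp_ℝ ▸ NormedSpace.expSeries_div_hasSum_exp x).mul_left (x ^ 2 / 2))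
  have hfac : 2 * n ! ≤ (n + 2)! := by
    rw [Nat.factorial_succ, Nat.factorial_succ, ← mul_assoc]
    exact Nat.mul_le_mul_right _ (by nlinarith)
  calc x ^ (n + 2) / (n + 2)! ≤ x ^ (n + 2) / (2 * n !) := by gcongr; exact_mod_cast hfac
    _ = x ^ 2 / 2 * (x ^ n / n !) := by ring

lemma integral_rpow_mul_one_sub_rpow {s t : ℝ} (hs : 0 < s) (ht : 0 < t) :
    ∫ x in (0 : ℝ)..1, x ^ (s - 1) * (1 - x) ^ (t - 1) = Gamma s * Gamma t / Gamma (s + t) := by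
  have h := Complex.Gamma_mul_Gamma_eq_betaIntegral (s := s) (t := t) (by simpa) (by simpa)
  have hβ : Complex.betaIntegral s t = ↑(∫ x in (0 : ℝ)..1, x ^ (s - 1) * (1 - x) ^ (t - 1)) := by
    rw [Complex.betaIntegral, ← intervalIntegral.integral_ofReal]
    refine integral_congr fun x hx => ?_
    rw [uIcc_of_le zero_le_one] at hx
    push_cast
    rw [Complex.ofReal_cpow hx.1, Complex.ofReal_cpow (sub_nonneg.2 hx.2)]
    push_cast; rfl
  rw [← Complex.ofReal_add, Complex.Gamma_ofReal, Complex.Gamma_ofReal, Complex.Gamma_ofReal, hβ,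
    ← Complex.ofReal_mul, ← Complex.ofReal_mul, Complex.ofReal_inj] at h
  rw [h, mul_div_cancel_left₀ _ (Gamma_pos_of_pos (add_pos hs ht)).ne']

lemma Gamma_three_div_two : Gamma (3 / 2) = √π / 2 := by
  rw [show (3 / 2 : ℝ) = 1 / 2 + 1 by norm_num, Gamma_add_one (by norm_num), Gamma_one_half_eq]
  ring

lemma integral_pow_mul_sqrt_one_sub (n : ℕ) :
    ∫ u in (0 : ℝ)..1, u ^ n * √(1 - u) = n ! * Gamma (3 / 2) / Gamma (n + 5 / 2) := by
  have h := integral_rpow_mul_one_sub_rpow (s := n + 1) (t := 3 / 2) (by positivity) (by norm_num)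
  rw [Gamma_nat_eq_factorial, show (n + 1 + 3 / 2 : ℝ) = n + 5 / 2 by ring] at h
  rw [← h]
  refine integral_congr fun u _ => ?_
  rw [add_sub_cancel_right, rpow_natCast, sqrt_eq_rpow]
  norm_num

lemma integral_Ioi_sqrt_mul_exp_neg : ∫ s in Ioi 0, √s * exp (-s) = Gamma (3 / 2) := by
  rw [Gamma_eq_integral (by norm_num)]
  refine setIntegral_congr_fun measurableSet_Ioi fun s _ => ?_
  rw [sqrt_eq_rpow, mul_comm]
  norm_num

lemma integrableOn_Ioi_sqrt_mul_exp_neg : IntegrableOn (fun s => √s * exp (-s)) (Ioi 0) := by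
  refine (GammaIntegral_convergent (s := 3 / 2) (by norm_num)).congr_fun (fun s _ => ?_)
    measurableSet_Ioi
  rw [sqrt_eq_rpow, mul_comm]
  norm_num

lemma rpow_neg_three_div_two {z : ℝ} (hz : 0 ≤ z) : z ^ (-(3 : ℝ) / 2) = (z * √z)⁻¹ := by
  rw [show -(3 : ℝ) / 2 = -(1 + 1 / 2) by norm_num, rpow_neg hz, rpow_add' hz (by norm_num),
    rpow_one, sqrt_eq_rpow]

end Real

lemma tendsto_integral_div_one_sub_div_sq {f : ℝ → ℝ} (hf : IntegrableOn f (Ioi 0)) :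
    Tendsto (fun z => ∫ s in (0 : ℝ)..z / 2, f s / (1 - s / z) ^ 2) atTop
      (𝓝 (∫ s in Ioi 0, f s)) := by
  let F (z s : ℝ) : ℝ := (Ioc 0 (z / 2)).indicator (fun s => f s / (1 - s / z) ^ 2) s
  have hF_eq : ∀ᶠ z in atTop,
      ∫ s in (0 : ℝ)..z / 2, f s / (1 - s / z) ^ 2 = ∫ s in Ioi 0, F z s := by
    filter_upwards [eventually_ge_atTop 0] with z hz
    rw [MeasureTheory.integral_indicator measurableSet_Ioc,
      Measure.restrict_restrict measurableSet_Ioc,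
      inter_eq_self_of_subset_left Ioc_subset_Ioi_self, integral_of_le (by positivity)]
  refine Tendsto.congr' (EventuallyEq.symm hF_eq) <|
    tendsto_integral_filter_of_dominated_convergence (fun s => 4 * ‖f s‖) ?_ ?_
      (hf.norm.const_mul 4) ?_
  · exact Eventually.of_forall fun z =>
      (hf.aemeasurable.div (by fun_prop)).aestronglyMeasurable.indicator measurableSet_Ioc
  · filter_upwards [eventually_gt_atTop 0] with z hz
    refine ae_of_all _ fun s => ?_
    by_cases hs : s ∈ Ioc 0 (z / 2)
    · have hquarter : 1 / 4 ≤ (1 - s / z) ^ 2 := by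
        have : s / z ≤ 1 / 2 := by rw [div_le_iff₀ hz]; linarith [hs.2]
        nlinarith
      simp only [F, indicator_of_mem hs, norm_div, norm_pow, Real.norm_eq_abs, sq_abs]
      rw [div_le_iff₀ (by positivity)]
      nlinarith [abs_nonneg (f s)]
    · simp only [F, indicator_of_notMem hs, norm_zero]
      positivity
  · refine (ae_restrict_iff' measurableSet_Ioi).mpr (ae_of_all _ fun s (hs : 0 < s) => ?_)
    have hlim : Tendsto (fun z => f s / (1 - s / z) ^ 2) atTop (𝓝 (f s)) := by
      have h : Tendsto (fun z => (1 - s / z) ^ 2) atTop (𝓝 1) := by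
        simpa using ((tendsto_const_nhds (x := (1 : ℝ))).sub
          (tendsto_const_nhds.div_atTop tendsto_id)).pow 2
      simpa [div_eq_mul_inv] using (h.inv₀ one_ne_zero).const_mul (f s)
    refine hlim.congr' ?_
    filter_upwards [eventually_ge_atTop (2 * s)] with z hz
    simp only [F, indicator_of_mem (show s ∈ Ioc 0 (z / 2) from ⟨hs, by linarith⟩)]

noncomputable def F2Integral (z : ℝ) : ℝ :=
  ∫ u in (0 : ℝ)..1, √(1 - u) * (exp (z * u) - 1 - z * u) / u ^ 2

lemma hasSum_F2fun_series (z : ℝ) :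
    HasSum (fun n : ℕ => z ^ (n + 2) /
      (((n : ℝ) + 2) * ((n : ℝ) + 1) * Real.Gamma (1 / 2 + ((n : ℝ) + 2))))
      (F2Integral z / Gamma (3 / 2)) := by
  have hΓ : 0 < Gamma (3 / 2) := Gamma_pos_of_pos (by norm_num)
  have hswap : HasSum (fun n : ℕ => ∫ u in (0 : ℝ)..1, z ^ (n + 2) / (n + 2)! * (u ^ n * √(1 - u)))
      (F2Integral z) := by
    refine hasSum_integral_of_dominated_convergence (fun n _ => |z| ^ (n + 2) / (n + 2)!)
      (fun n => by fun_prop) (fun n => ae_of_all _ fun u hu => ?_)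
      (ae_of_all _ fun u _ => ?_) intervalIntegrable_const (ae_of_all _ fun u hu => ?_)
    · rw [uIoc_of_le zero_le_one] at hu
      have hpow : u ^ n ≤ 1 := pow_le_one₀ hu.1.le hu.2
      have hsqrt : √(1 - u) ≤ 1 := sqrt_le_one.mpr (by linarith [hu.1])
      rw [norm_mul, Real.norm_of_nonneg (mul_nonneg (pow_nonneg hu.1.le n) (sqrt_nonneg _)),
        norm_div, norm_pow, Real.norm_natCast, Real.norm_eq_abs]
      exact mul_le_of_le_one_right (by positivity) (mul_le_one₀ hpow (sqrt_nonneg _) hsqrt)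
    · exact (summable_pow_div_factorial |z|).comp_injective (add_left_injective 2)
    · rw [uIoc_of_le zero_le_one] at hu
      rw [mul_div_right_comm, mul_comm]
      refine ((hasSum_pow_div_factorial_add_two (z * u)).mul_right (√(1 - u) / u ^ 2)).congr_fun
        fun n => ?_
      rw [mul_pow, pow_add u]
      field_simp [hu.1.ne']
  have hterm (n : ℕ) : ∫ u in (0 : ℝ)..1, z ^ (n + 2) / (n + 2)! * (u ^ n * √(1 - u)) =
      z ^ (n + 2) / (((n : ℝ) + 2) * ((n : ℝ) + 1) * Real.Gamma (1 / 2 + ((n : ℝ) + 2)))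
        * Gamma (3 / 2) := by
    rw [intervalIntegral.integral_const_mul, integral_pow_mul_sqrt_one_sub, Nat.factorial_succ,
      Nat.factorial_succ, show (1 / 2 + ((n : ℝ) + 2)) = n + 5 / 2 by ring]
    push_cast
    field_simp
    ring
  simp_rw [hterm] at hswap
  simpa [hΓ.ne'] using hswap.div_const (Gamma (3 / 2))

lemma F2fun_eq_two_mul_F2Integral (z : ℝ) : F2fun z = 2 * F2Integral z := by
  rw [F2fun, (hasSum_F2fun_series z).tsum_eq, Gamma_three_div_two]
  field_simp [(sqrt_pos.2 pi_pos).ne']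

lemma integral_sqrt_one_sub_mul_exp_div_sq {z : ℝ} (hz : 0 < z) :
    ∫ u in (1 / 2 : ℝ)..1, √(1 - u) * exp (z * u) / u ^ 2 =
      z ^ (-(3 : ℝ) / 2) * exp z * ∫ s in (0 : ℝ)..z / 2, √s * exp (-s) / (1 - s / z) ^ 2 := by
  have h := integral_comp_sub_mul (a := 0) (b := z / 2)
    (fun u => √(1 - u) * exp (z * u) / u ^ 2) (inv_ne_zero hz.ne') 1
  have hhalf : (1 : ℝ) - z⁻¹ * (z / 2) = 1 / 2 := by field_simp; norm_num
  rw [mul_zero, sub_zero, hhalf, inv_inv, smul_eq_mul] at h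
  rw [← inv_mul_cancel_left₀ hz.ne' (∫ u in (1 / 2 : ℝ)..1, _), ← h,
    rpow_neg_three_div_two hz.le, ← intervalIntegral.integral_const_mul,
    ← intervalIntegral.integral_const_mul]
  refine integral_congr fun s hs => ?_
  rw [uIcc_of_le (by positivity)] at hs
  rw [sub_sub_cancel, sqrt_mul' _ hs.1, sqrt_inv, mul_sub, mul_one, ← mul_assoc,
    mul_inv_cancel₀ hz.ne', one_mul, exp_sub, exp_neg]
  field_simp

lemma norm_sqrt_one_sub_mul_exp_sub_one_sub_div_sq_le {z u : ℝ} (hz : 0 ≤ z) (hu : 0 < u) :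
    ‖√(1 - u) * (exp (z * u) - 1 - z * u) / u ^ 2‖ ≤ z ^ 2 / 2 * exp (z * u) := by
  have hrem : 0 ≤ exp (z * u) - 1 - z * u := by linarith [add_one_le_exp (z * u)]
  have hsqrt : √(1 - u) ≤ 1 := sqrt_le_one.mpr (by linarith)
  rw [Real.norm_of_nonneg (by positivity), div_le_iff₀ (by positivity)]
  calc √(1 - u) * (exp (z * u) - 1 - z * u) ≤ 1 * (exp (z * u) - 1 - z * u) := by gcongr
    _ ≤ (z * u) ^ 2 / 2 * exp (z * u) := by
      rw [one_mul]; exact exp_sub_one_sub_le (by positivity)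
    _ = z ^ 2 / 2 * exp (z * u) * u ^ 2 := by ring

lemma intervalIntegrable_sqrt_one_sub_mul_exp_sub_one_sub_div_sq {z : ℝ} (hz : 0 ≤ z) :
    IntervalIntegrable (fun u => √(1 - u) * (exp (z * u) - 1 - z * u) / u ^ 2) volume 0 1 := by
  refine (intervalIntegrable_const (c := z ^ 2 / 2 * exp z)).mono_fun'
    (Measurable.aestronglyMeasurable (by fun_prop))
    ((ae_restrict_iff' measurableSet_uIoc).mpr (ae_of_all _ fun u hu => ?_))
  rw [uIoc_of_le zero_le_one] at hu
  dsimp only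
  refine (norm_sqrt_one_sub_mul_exp_sub_one_sub_div_sq_le hz hu.1).trans ?_
  gcongr
  nlinarith [hu.2]

lemma abs_F2Integral_sub_integral_le {z : ℝ} (hz : 1 ≤ z) :
    |F2Integral z - ∫ u in (1 / 2 : ℝ)..1, √(1 - u) * exp (z * u) / u ^ 2| ≤
      5 * z ^ 2 * exp (z / 2) := by
  set g := fun u => √(1 - u) * (exp (z * u) - 1 - z * u) / u ^ 2
  set h := fun u => √(1 - u) * exp (z * u) / u ^ 2
  set k := fun u => √(1 - u) * (1 + z * u) / u ^ 2
  have hg : IntervalIntegrable g volume 0 1 :=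
    intervalIntegrable_sqrt_one_sub_mul_exp_sub_one_sub_div_sq (by linarith)
  have hsq : ∀ u ∈ uIcc (1 / 2 : ℝ) 1, u ^ 2 ≠ 0 := fun u hu => by
    rw [uIcc_of_le (by norm_num)] at hu; exact pow_ne_zero 2 (by linarith [hu.1])
  have hh : IntervalIntegrable h volume (1 / 2) 1 :=
    (ContinuousOn.div (by fun_prop) (by fun_prop) hsq).intervalIntegrable
  have hk : IntervalIntegrable k volume (1 / 2) 1 :=
    (ContinuousOn.div (by fun_prop) (by fun_prop) hsq).intervalIntegrable
  have hsplit : F2Integral z - ∫ u in (1 / 2 : ℝ)..1, h u =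
      (∫ u in (0 : ℝ)..1 / 2, g u) - ∫ u in (1 / 2 : ℝ)..1, k u := by
    rw [F2Integral, ← integral_add_adjacent_intervals (b := 1 / 2)
      (hg.mono_set (uIcc_subset_uIcc left_mem_uIcc (by simp; norm_num)))
      (hg.mono_set (uIcc_subset_uIcc (by simp; norm_num) right_mem_uIcc)),
      integral_congr (a := 1 / 2) (b := 1) (g := fun u => h u - k u)
        (fun u _ => by simp only [g, h, k]; ring), integral_sub hh hk]
    ring
  have hg_le : ‖∫ u in (0 : ℝ)..1 / 2, g u‖ ≤ z ^ 2 / 2 * exp (z / 2) * |1 / 2 - 0| := by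
    refine norm_integral_le_of_norm_le_const fun u hu => ?_
    rw [uIoc_of_le (by norm_num)] at hu
    refine (norm_sqrt_one_sub_mul_exp_sub_one_sub_div_sq_le (by linarith) hu.1).trans ?_
    gcongr
    nlinarith [hu.2]
  have hk_le : ‖∫ u in (1 / 2 : ℝ)..1, k u‖ ≤ 4 * (1 + z) * |1 - 1 / 2| := by
    refine norm_integral_le_of_norm_le_const fun u hu => ?_
    rw [uIoc_of_le (by norm_num)] at hu
    obtain ⟨hu0, hu1⟩ := hu
    have hsqrt : √(1 - u) ≤ 1 := sqrt_le_one.mpr (by linarith)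
    rw [Real.norm_of_nonneg (by positivity), div_le_iff₀ (by positivity)]
    have hu2 : 1 / 4 ≤ u ^ 2 := by nlinarith
    calc √(1 - u) * (1 + z * u) ≤ 1 * (1 + z) := by gcongr; nlinarith
      _ ≤ 4 * (1 + z) * u ^ 2 := by nlinarith
  rw [hsplit]
  refine (abs_sub _ _).trans ?_
  have hexp : 1 ≤ exp (z / 2) := one_le_exp (by linarith)
  norm_num at hg_le hk_le
  nlinarith [mul_le_mul_of_nonneg_left hexp (sq_nonneg z)]

lemma tendsto_F2Integral_div :
    Tendsto (fun z => F2Integral z / (z ^ (-(3 : ℝ) / 2) * exp z)) atTop (𝓝 (Gamma (3 / 2))) := by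
  have hmain := tendsto_integral_div_one_sub_div_sq integrableOn_Ioi_sqrt_mul_exp_neg
  rw [integral_Ioi_sqrt_mul_exp_neg] at hmain
  have herr : Tendsto (fun z => (F2Integral z -
      ∫ u in (1 / 2 : ℝ)..1, √(1 - u) * exp (z * u) / u ^ 2) / (z ^ (-(3 : ℝ) / 2) * exp z))
      atTop (𝓝 0) := by
    have hlim := (tendsto_rpow_mul_exp_neg_mul_atTop_nhds_zero (7 / 2) (1 / 2)
      (by norm_num)).const_mul 5
    rw [mul_zero] at hlim
    refine squeeze_zero_norm' ?_ hlim
    filter_upwards [eventually_ge_atTop 1] with z hz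
    have hz0 : 0 < z := by linarith
    rw [norm_div, Real.norm_eq_abs, Real.norm_of_nonneg (by positivity),
      div_le_iff₀ (by positivity)]
    refine (abs_F2Integral_sub_integral_le hz).trans_eq ?_
    rw [rpow_neg_three_div_two hz0.le, show (7 / 2 : ℝ) = 2 + 3 / 2 by norm_num,
      rpow_add hz0, rpow_two, show (3 / 2 : ℝ) = 1 + 1 / 2 by norm_num, rpow_add hz0, rpow_one,
      ← sqrt_eq_rpow, show -(1 / 2) * z = -(z / 2) by ring, exp_neg,
      show exp z = exp (z / 2) * exp (z / 2) by rw [← exp_add, add_halves]]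
    field_simp
  rw [← add_zero (Gamma (3 / 2))]
  refine (hmain.add herr).congr' ?_
  filter_upwards [eventually_gt_atTop 0] with z hz
  have hden : z ^ (-(3 : ℝ) / 2) * exp z ≠ 0 := by positivity
  rw [integral_sqrt_one_sub_mul_exp_div_sq hz, sub_div, mul_div_cancel_left₀ _ hden]
  ring

theorem F2fun_asymptotic :
    Tendsto (fun z => F2fun z / (z ^ (-(3:ℝ)/2) * Real.exp z)) atTop (nhds (Real.sqrt π)) := by
  have h := tendsto_F2Integral_div.const_mul 2
  rw [Gamma_three_div_two, mul_div_cancel₀ _ two_ne_zero] at h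
  simpa only [F2fun_eq_two_mul_F2Integral, mul_div_assoc] using h
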